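/- On smooth functions f: ℝⁿ → ℂ, Σ_{a,b,d=1}^n ξ_b ξ_d (ξ_a ∂_b − ξ_b ∂_a)(ξ_a ∂_d − ξ_d ∂_a) f = ‖ξ‖⁴ Δf − ‖ξ‖² E²f − (n−2)‖ξ‖² Ef, where E = Σ_k ξ_k ∂_k and Δ = Σ_k ∂_k². -/

import Mathlib

/-- The partial derivative `∂_j` on functions `ℝⁿ → ℂ`. -/
noncomputable def pd {n : ℕ} (j : Fin n) (f : (Fin n → ℝ) → ℂ) : (Fin n → ℝ) → ℂ :=
  fun ξ => fderiv ℝ f ξ (Pi.single j 1)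

/-- The Euler operator `E = Σ_k ξ_k ∂_k`. -/
noncomputable def eulerOp {n : ℕ} (f : (Fin n → ℝ) → ℂ) : (Fin n → ℝ) → ℂ :=
  fun ξ => ∑ k, (ξ k : ℂ) * pd k f ξ

/-- The Laplacian `Δ = Σ_k ∂_k²`. -/
noncomputable def lapOp {n : ℕ} (f : (Fin n → ℝ) → ℂ) : (Fin n → ℝ) → ℂ :=
  fun ξ => ∑ k, pd k (pd k f) ξ

/-- The rotation vector field `ξ_a ∂_b − ξ_b ∂_a`. -/
noncomputable def rotOp {n : ℕ} (a b : Fin n) (f : (Fin n → ℝ) → ℂ) : (Fin n → ℝ) → ℂ :=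
  fun ξ => (ξ a : ℂ) * pd b f ξ - (ξ b : ℂ) * pd a f ξ

lemma contDiff_pd {n : ℕ} {f : (Fin n → ℝ) → ℂ} (hf : ContDiff ℝ (⊤ : ℕ∞) f) (j : Fin n) :
    ContDiff ℝ (⊤ : ℕ∞) (pd j f) :=
  (hf.fderiv_right (by simp)).clm_apply contDiff_const

lemma contDiff_coord {n : ℕ} (i : Fin n) :
    ContDiff ℝ (⊤ : ℕ∞) (fun x : Fin n → ℝ => (x i : ℂ)) := by
  have : (fun x : Fin n → ℝ => (x i : ℂ))
      = fun x => (Complex.ofRealCLM.comp (ContinuousLinearMap.proj i)) x := by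
    funext x; simp
  rw [this]
  exact (Complex.ofRealCLM.comp (ContinuousLinearMap.proj i) : (Fin n → ℝ) →L[ℝ] ℂ).contDiff

lemma contDiff_coord_mul {n : ℕ} {g : (Fin n → ℝ) → ℂ} (hg : ContDiff ℝ (⊤ : ℕ∞) g) (i : Fin n) :
    ContDiff ℝ (⊤ : ℕ∞) (fun x : Fin n → ℝ => (x i : ℂ) * g x) :=
  (contDiff_coord i).mul hg

lemma pd_coord_mul {n : ℕ} {g : (Fin n → ℝ) → ℂ} (hg : ContDiff ℝ (⊤ : ℕ∞) g) (i j : Fin n)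
    (ξ : Fin n → ℝ) :
    pd j (fun x => (x i : ℂ) * g x) ξ
      = (if j = i then 1 else 0) * g ξ + (ξ i : ℂ) * pd j g ξ := by
  set c : (Fin n → ℝ) →L[ℝ] ℂ := Complex.ofRealCLM.comp (ContinuousLinearMap.proj i) with hcdef
  have hc : (fun x : Fin n → ℝ => (x i : ℂ)) = fun x => c x := by
    funext x; simp [hcdef]
  have hcd : DifferentiableAt ℝ (fun x : Fin n → ℝ => (x i : ℂ)) ξ := by
    rw [hc]; exact c.differentiableAt
  unfold pd
  rw [fderiv_fun_mul hcd (hg.differentiable (by simp)).differentiableAt]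
  have : fderiv ℝ (fun x : Fin n → ℝ => (x i : ℂ)) ξ = c := by
    rw [hc]; exact c.fderiv
  by_cases h : j = i <;>
    simp [this, hcdef, Pi.single_apply, h, eq_comm] <;> ring

lemma pd_sub {n : ℕ} {g h : (Fin n → ℝ) → ℂ} (hg : ContDiff ℝ (⊤ : ℕ∞) g) (hh : ContDiff ℝ (⊤ : ℕ∞) h)
    (j : Fin n) (ξ : Fin n → ℝ) :
    pd j (fun x => g x - h x) ξ = pd j g ξ - pd j h ξ := by
  unfold pd
  rw [fderiv_fun_sub (hg.differentiable (by simp)).differentiableAt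
    (hh.differentiable (by simp)).differentiableAt]
  simp

lemma pd_rot {n : ℕ} {f : (Fin n → ℝ) → ℂ} (hf : ContDiff ℝ (⊤ : ℕ∞) f) (a d b : Fin n)
    (ξ : Fin n → ℝ) :
    pd b (rotOp a d f) ξ
      = ((if b = a then 1 else 0) * pd d f ξ + (ξ a : ℂ) * pd b (pd d f) ξ)
        - ((if b = d then 1 else 0) * pd a f ξ + (ξ d : ℂ) * pd b (pd a f) ξ) := by
  have : rotOp a d f = fun x => (x a : ℂ) * pd d f x - (x d : ℂ) * pd a f x := rfl
  rw [this, pd_sub (contDiff_coord_mul (contDiff_pd hf d) a)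
    (contDiff_coord_mul (contDiff_pd hf a) d),
    pd_coord_mul (contDiff_pd hf d), pd_coord_mul (contDiff_pd hf a)]

lemma pd_euler {n : ℕ} {f : (Fin n → ℝ) → ℂ} (hf : ContDiff ℝ (⊤ : ℕ∞) f) (j : Fin n)
    (ξ : Fin n → ℝ) :
    pd j (eulerOp f) ξ = pd j f ξ + ∑ k, (ξ k : ℂ) * pd j (pd k f) ξ := by
  have h1 : eulerOp f = fun x => ∑ k, (x k : ℂ) * pd k f x := rfl
  have h2 : pd j (fun x => ∑ k : Fin n, (x k : ℂ) * pd k f x) ξ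
      = ∑ k : Fin n, pd j (fun x => (x k : ℂ) * pd k f x) ξ := by
    have hdsum := fderiv_fun_sum (𝕜 := ℝ) (x := ξ) (u := (Finset.univ : Finset (Fin n)))
      (A := fun (k : Fin n) (x : Fin n → ℝ) => (x k : ℂ) * pd k f x)
      (fun k _ => ((contDiff_coord_mul (contDiff_pd hf k) k).differentiable
        (by simp)).differentiableAt)
    show fderiv ℝ (fun x => ∑ k : Fin n, (x k : ℂ) * pd k f x) ξ (Pi.single j 1) = _
    rw [hdsum, ContinuousLinearMap.sum_apply]
    rfl
  rw [h1, h2]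
  rw [Finset.sum_congr rfl (fun k _ => pd_coord_mul (contDiff_pd hf k) k j ξ),
    Finset.sum_add_distrib]
  congr 1
  simp [Finset.sum_ite_eq, Finset.mem_univ]

lemma helper1 {n : ℕ} (p : Fin n → ℂ) (g : Fin n → Fin n → ℂ) :
    ∑ a, ∑ b, ∑ d, p a * g b d = (∑ a, p a) * ∑ b, ∑ d, g b d := by
  rw [Finset.sum_mul]
  refine Finset.sum_congr rfl fun a _ => ?_
  rw [Finset.mul_sum]
  exact Finset.sum_congr rfl fun b _ => (Finset.mul_sum _ _ _).symm

lemma helper2 {n : ℕ} (q : Fin n → Fin n → ℂ) (r : Fin n → ℂ) :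
    ∑ a, ∑ b, ∑ d, q a b * r d = (∑ a, ∑ b, q a b) * ∑ d, r d := by
  rw [Finset.sum_mul]
  refine Finset.sum_congr rfl fun a _ => ?_
  rw [Finset.sum_mul]
  exact Finset.sum_congr rfl fun b _ => (Finset.mul_sum _ _ _).symm

lemma helper3 {n : ℕ} (p : Fin n → ℂ) (g : Fin n → Fin n → ℂ) :
    ∑ a, ∑ b, ∑ d, p b * g a d = (∑ b, p b) * ∑ a, ∑ d, g a d := by
  rw [Finset.mul_sum]
  refine Finset.sum_congr rfl fun a _ => ?_
  rw [Finset.sum_mul]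
  exact Finset.sum_congr rfl fun b _ => (Finset.mul_sum _ _ _).symm

lemma key_alg (n : ℕ) (v F : Fin n → ℂ) (H : Fin n → Fin n → ℂ) :
    ∑ a, ∑ b, ∑ d, v b * v d *
      (v a * (((if b = a then 1 else 0) * F d + v a * H b d)
            - ((if b = d then 1 else 0) * F a + v d * H b a))
       - v b * (((if a = a then 1 else 0) * F d + v a * H a d)
            - ((if a = d then 1 else 0) * F a + v d * H a a)))
    = (∑ k, v k ^ 2) ^ 2 * (∑ k, H k k)
      - (∑ k, v k ^ 2) * (∑ k, v k * (F k + ∑ j, v j * H k j))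
      - ((n : ℂ) - 2) * (∑ k, v k ^ 2) * (∑ k, v k * F k) := by
  have step1 : ∀ a b d : Fin n, v b * v d *
      (v a * (((if b = a then 1 else 0) * F d + v a * H b d)
            - ((if b = d then 1 else 0) * F a + v d * H b a))
       - v b * (((if a = a then 1 else 0) * F d + v a * H a d)
            - ((if a = d then 1 else 0) * F a + v d * H a a)))
      = (if b = a then 1 else 0) * (v b * v d * v a * F d)
        + v b * v d * v a * v a * H b d
        - (if b = d then 1 else 0) * (v b * v d * v a * F a)
        - v b * v d * v a * v d * H b a
        - v b * v b * v d * F d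
        - v b * v b * v d * v a * H a d
        + (if a = d then 1 else 0) * (v b * v b * v d * F a)
        + v b * v b * v d * v d * H a a := by
    intro a b d
    simp only [eq_self_iff_true, if_true]
    ring
  rw [Finset.sum_congr rfl fun a _ => Finset.sum_congr rfl fun b _ =>
    Finset.sum_congr rfl fun d _ => step1 a b d]
  simp only [ite_mul, one_mul, zero_mul, Finset.sum_add_distrib, Finset.sum_sub_distrib,
    Finset.sum_ite_irrel, Finset.sum_const_zero, Finset.sum_ite_eq, Finset.sum_ite_eq',
    Finset.mem_univ, if_true]
  have h1 : ∑ a : Fin n, ∑ d : Fin n, v a * v d * v a * F d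
      = (∑ k, v k ^ 2) * (∑ k, v k * F k) := by
    rw [Finset.sum_mul_sum]
    exact Finset.sum_congr rfl fun a _ => Finset.sum_congr rfl fun d _ => by ring
  have h2 : ∑ a : Fin n, ∑ b : Fin n, ∑ d : Fin n, v b * v d * v a * v a * H b d
      = (∑ k, v k ^ 2) * (∑ b, ∑ d, v b * v d * H b d) := by
    rw [← helper1 (fun a => v a ^ 2) (fun b d => v b * v d * H b d)]
    exact Finset.sum_congr rfl fun a _ => Finset.sum_congr rfl fun b _ =>
      Finset.sum_congr rfl fun d _ => by ring
  have h3 : ∑ a : Fin n, ∑ b : Fin n, v b * v b * v a * F a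
      = (∑ k, v k * F k) * (∑ k, v k ^ 2) := by
    rw [Finset.sum_mul_sum]
    exact Finset.sum_congr rfl fun a _ => Finset.sum_congr rfl fun b _ => by ring
  have h4 : ∑ a : Fin n, ∑ b : Fin n, ∑ d : Fin n, v b * v d * v a * v d * H b a
      = (∑ b, ∑ d, v b * v d * H b d) * (∑ k, v k ^ 2) := by
    have e1 : ∑ a : Fin n, ∑ b : Fin n, v a * v b * H b a
        = ∑ b : Fin n, ∑ d : Fin n, v b * v d * H b d := by
      rw [Finset.sum_comm]
      exact Finset.sum_congr rfl fun b _ => Finset.sum_congr rfl fun a _ => by ring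
    rw [← e1, ← helper2 (fun a b => v a * v b * H b a) (fun d => v d ^ 2)]
    exact Finset.sum_congr rfl fun a _ => Finset.sum_congr rfl fun b _ =>
      Finset.sum_congr rfl fun d _ => by ring
  have h5 : ∑ _a : Fin n, ∑ b : Fin n, ∑ d : Fin n, v b * v b * v d * F d
      = (n : ℂ) * ((∑ k, v k ^ 2) * (∑ k, v k * F k)) := by
    rw [Finset.sum_const, Finset.card_univ, Fintype.card_fin, nsmul_eq_mul]
    congr 1
    rw [Finset.sum_mul_sum]
    exact Finset.sum_congr rfl fun b _ => Finset.sum_congr rfl fun d _ => by ring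
  have h6 : ∑ a : Fin n, ∑ b : Fin n, ∑ d : Fin n, v b * v b * v d * v a * H a d
      = (∑ k, v k ^ 2) * (∑ b, ∑ d, v b * v d * H b d) := by
    rw [← helper3 (fun b => v b ^ 2) (fun a d => v a * v d * H a d)]
    exact Finset.sum_congr rfl fun a _ => Finset.sum_congr rfl fun b _ =>
      Finset.sum_congr rfl fun d _ => by ring
  have h8 : ∑ a : Fin n, ∑ b : Fin n, ∑ d : Fin n, v b * v b * v d * v d * H a a
      = (∑ k, H k k) * ((∑ k, v k ^ 2) * (∑ k, v k ^ 2)) := by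
    rw [Fintype.sum_mul_sum (f := fun k : Fin n => v k ^ 2) (g := fun k : Fin n => v k ^ 2),
      ← helper1 (fun a => H a a) (fun b d => v b ^ 2 * v d ^ 2)]
    exact Finset.sum_congr rfl fun a _ => Finset.sum_congr rfl fun b _ =>
      Finset.sum_congr rfl fun d _ => by ring
  have hE : ∑ k : Fin n, v k * (F k + ∑ j, v j * H k j)
      = (∑ k, v k * F k) + ∑ b, ∑ d, v b * v d * H b d := by
    simp only [mul_add, Finset.sum_add_distrib]
    congr 1
    exact Finset.sum_congr rfl fun b _ => by
      rw [Finset.mul_sum]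
      exact Finset.sum_congr rfl fun d _ => by ring
  rw [h1, h2, h3, h4, h5, h6, h8, hE]
  ring

/-- `Σ_{a,b,d} ξ_b ξ_d (ξ_a ∂_b − ξ_b ∂_a)(ξ_a ∂_d − ξ_d ∂_a) f
      = ‖ξ‖⁴ Δf − ‖ξ‖² E²f − (n−2)‖ξ‖² Ef`. -/
theorem sum_rot_rot_weighted_eq (n : ℕ) (f : (Fin n → ℝ) → ℂ)
    (hf : ContDiff ℝ (⊤ : ℕ∞) f) (ξ : Fin n → ℝ) :
    ∑ a, ∑ b, ∑ d, (ξ b : ℂ) * (ξ d : ℂ) * rotOp a b (rotOp a d f) ξ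
      = (∑ k, (ξ k : ℂ) ^ 2) ^ 2 * lapOp f ξ
        - (∑ k, (ξ k : ℂ) ^ 2) * eulerOp (eulerOp f) ξ
        - ((n : ℂ) - 2) * (∑ k, (ξ k : ℂ) ^ 2) * eulerOp f ξ := by
  have hL : ∀ a b d : Fin n, rotOp a b (rotOp a d f) ξ
      = (ξ a : ℂ) * (((if b = a then 1 else 0) * pd d f ξ + (ξ a : ℂ) * pd b (pd d f) ξ)
            - ((if b = d then 1 else 0) * pd a f ξ + (ξ d : ℂ) * pd b (pd a f) ξ))
        - (ξ b : ℂ) * (((if a = a then 1 else 0) * pd d f ξ + (ξ a : ℂ) * pd a (pd d f) ξ)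
            - ((if a = d then 1 else 0) * pd a f ξ + (ξ d : ℂ) * pd a (pd a f) ξ)) := by
    intro a b d
    show (ξ a : ℂ) * pd b (rotOp a d f) ξ - (ξ b : ℂ) * pd a (rotOp a d f) ξ = _
    rw [pd_rot hf a d b ξ, pd_rot hf a d a ξ]
  have hEE : eulerOp (eulerOp f) ξ
      = ∑ k, (ξ k : ℂ) * (pd k f ξ + ∑ j, (ξ j : ℂ) * pd k (pd j f) ξ) := by
    show ∑ k, (ξ k : ℂ) * pd k (eulerOp f) ξ = _
    exact Finset.sum_congr rfl fun k _ => by rw [pd_euler hf k ξ]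
  have hlap : lapOp f ξ = ∑ k, pd k (pd k f) ξ := rfl
  have hEf : eulerOp f ξ = ∑ k, (ξ k : ℂ) * pd k f ξ := rfl
  rw [hEE, hlap, hEf,
    Finset.sum_congr rfl fun a _ => Finset.sum_congr rfl fun b _ =>
      Finset.sum_congr rfl fun d _ => by rw [hL a b d]]
  exact key_alg n (fun k => (ξ k : ℂ)) (fun k => pd k f ξ) (fun x y => pd x (pd y f) ξ)
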